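/- (Recursive feasibility, worst case) Consider follower dynamics ṗ̂ = v̂, v̇ = a_i, v̇_{i−1} = a_{i−1}, v̂ = v − v_{i−1}. Suppose at time t₀ the constraints v_min ≤ v ≤ v_max and g(p̂, v̂, v) ≤ 0 hold, where g = p̂ + δ + v̂·(v_min − v)/a_min + v̂²/(2a_min) for v̂ > 0 and g = p̂ + δ for v̂ ≤ 0. If the leader applies a_{i−1}(t) = a_min until v_{i−1} = v_min and then a_{i−1} = 0, then the follower strategy of applying a_i = a_min until v = v_min and a_i = 0 thereafter keeps g(t) ≤ 0 for all t ≥ t₀. -/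

import Mathlib

/-!
While both vehicles brake at `a_min` (each clipped at `v_min`), the gap changes by exactly the
difference of their remaining braking distances to `v_min`, so the gap at which they end up once
both have reached `v_min`, namely `p̂ + ((v_{i-1} - v_min)² - (v - v_min)²) / (2 a_min)`, is
conserved. For `v̂ > 0` the safety function is this terminal gap plus `δ`, and initially the
terminal gap plus `δ` is at most `g(t₀)` in either branch. For `v̂ ≤ 0` the safety function is
`p̂ + δ`: if the follower started faster, `v̂ ≤ 0` forces both to be at `v_min` and `p̂` equals the
terminal gap; otherwise the follower is never faster, so `p̂` never increases.
-/

open intervalIntegral Set Topology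

theorem hasDerivAt_sq_max_sub (m w : ℝ) :
    HasDerivAt (fun y => (max y m - m) ^ 2) (2 * (max w m - m)) w := by
  rcases lt_trichotomy w m with hw | rfl | hw
  · have hloc : (fun _ => (0 : ℝ)) =ᶠ[𝓝 w] fun y => (max y m - m) ^ 2 := by
      filter_upwards [eventually_lt_nhds hw] with y hy
      simp [max_eq_right hy.le]
    simpa [max_eq_right hw.le] using (hasDerivAt_const w (0 : ℝ)).congr_of_eventuallyEq hloc.symm
  · have hsq : HasDerivAt (fun y => (y - w) ^ 2) 0 w := by
      simpa using ((hasDerivAt_id w).sub_const w).fun_pow 2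
    have hleft : HasDerivWithinAt (fun y => (max y w - w) ^ 2) 0 (Iic w) w :=
      (hasDerivWithinAt_const w _ (0 : ℝ)).congr
        (fun y hy => by simp [max_eq_right (mem_Iic.1 hy)]) (by simp)
    have hright : HasDerivWithinAt (fun y => (max y w - w) ^ 2) 0 (Ici w) w :=
      hsq.hasDerivWithinAt.congr (fun y hy => by simp [max_eq_left (mem_Ici.1 hy)]) (by simp)
    simpa [Iic_union_Ici, hasDerivWithinAt_univ] using hleft.union hright
  · have hloc : (fun y => (y - m) ^ 2) =ᶠ[𝓝 w] fun y => (max y m - m) ^ 2 := by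
      filter_upwards [eventually_gt_nhds hw] with y hy
      rw [max_eq_left hy.le]
    simpa [max_eq_left hw.le] using
      (((hasDerivAt_id w).sub_const m).fun_pow 2).congr_of_eventuallyEq hloc.symm

theorem integral_max_affine {a : ℝ} (ha : a ≠ 0) (c m t0 t : ℝ) :
    ∫ s in t0..t, max (c + a * (s - t0)) m =
      m * (t - t0) + ((max (c + a * (t - t0)) m - m) ^ 2 - (max c m - m) ^ 2) / (2 * a) := by
  have hderiv : ∀ s, HasDerivAt (fun s => m * s + (max (c + a * (s - t0)) m - m) ^ 2 / (2 * a))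
      (max (c + a * (s - t0)) m) s := by
    intro s
    have hlin : HasDerivAt (fun s => c + a * (s - t0)) a s := by
      simpa using (((hasDerivAt_id s).sub_const t0).const_mul a).const_add c
    refine (((hasDerivAt_id' s).const_mul m).add
      (((hasDerivAt_sq_max_sub m _).comp s hlin).div_const (2 * a))).congr_deriv ?_
    field_simp
    ring
  have hcont : Continuous fun s => max (c + a * (s - t0)) m := by fun_prop
  rw [integral_eq_sub_of_hasDerivAt (fun s _ => hderiv s) (hcont.intervalIntegrable t0 t)]
  simp only [sub_self, mul_zero, add_zero]
  ring

/-- The change of the gap `p̂` while follower and leader brake at `a` from speeds `w` and `wL`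
down to `m`. -/
noncomputable def stoppingGapChange (a m w wL : ℝ) : ℝ := ((wL - m) ^ 2 - (w - m) ^ 2) / (2 * a)

theorem stoppingGapChange_self (a m w : ℝ) : stoppingGapChange a m w w = 0 := by
  simp [stoppingGapChange]

theorem stoppingGapChange_nonpos {a m w wL : ℝ} (ha : a < 0) (hm : m ≤ w) (h : w ≤ wL) :
    stoppingGapChange a m w wL ≤ 0 :=
  div_nonpos_of_nonneg_of_nonpos (by nlinarith) (by linarith)

theorem braking_terms_eq_stoppingGapChange {a : ℝ} (ha : a ≠ 0) (m w wL : ℝ) :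
    (w - wL) * (m - w) / a + (w - wL) ^ 2 / (2 * a) = stoppingGapChange a m w wL := by
  rw [stoppingGapChange]
  field_simp
  ring

theorem integral_sub_max_affine {a : ℝ} (ha : a ≠ 0) {m c d : ℝ} (hc : m ≤ c) (hd : m ≤ d)
    (t0 t : ℝ) :
    ∫ s in t0..t, (max (c + a * (s - t0)) m - max (d + a * (s - t0)) m) =
      stoppingGapChange a m c d -
        stoppingGapChange a m (max (c + a * (t - t0)) m) (max (d + a * (t - t0)) m) := by
  rw [integral_sub ((by fun_prop : Continuous _).intervalIntegrable _ _)
    ((by fun_prop : Continuous _).intervalIntegrable _ _), integral_max_affine ha,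
    integral_max_affine ha, max_eq_left hc, max_eq_left hd, stoppingGapChange, stoppingGapChange]
  ring

theorem integral_sub_max_affine_nonpos {a m c d t0 t : ℝ} (hcd : c ≤ d) (ht : t0 ≤ t) :
    ∫ s in t0..t, (max (c + a * (s - t0)) m - max (d + a * (s - t0)) m) ≤ 0 :=
  calc ∫ s in t0..t, (max (c + a * (s - t0)) m - max (d + a * (s - t0)) m)
      ≤ ∫ _ in t0..t, (0 : ℝ) :=
        integral_mono_on ht ((by fun_prop : Continuous _).intervalIntegrable _ _)
          intervalIntegrable_const
          fun s _ => sub_nonpos.2 (max_le_max_right _ (by linarith))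
    _ = 0 := integral_zero

theorem recursive_feasibility_worst_case_general
    (δ amin vmin vmax t0 : ℝ)
    (phat0 v0 vL0 : ℝ)
    (hamin : amin < 0)
    (hv0 : v0 ∈ Set.Icc vmin vmax) (hvL0 : vL0 ∈ Set.Icc vmin vmax)
    -- follower and leader clipped braking trajectories
    (v vL : ℝ → ℝ)
    (hv : ∀ t, v t = max (v0 + amin * (t - t0)) vmin)
    (hvL : ∀ t, vL t = max (vL0 + amin * (t - t0)) vmin)
    -- gap dynamics
    (phat : ℝ → ℝ)
    (hphat : ∀ t, phat t = phat0 + ∫ s in t0..t, (v s - vL s))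
    -- safety function (piecewise in the sign of v̂)
    (g : ℝ → ℝ → ℝ → ℝ)
    (hg : ∀ p q w, g p q w =
      if 0 < q then
        p + δ + q * (vmin - w) / amin + q ^ 2 / (2 * amin)
      else p + δ)
    -- initial feasibility
    (hinit : g phat0 (v0 - vL0) v0 ≤ 0) :
    ∀ t ≥ t0, g (phat t) (v t - vL t) (v t) ≤ 0 := by
  intro t ht
  have hg_terminal : ∀ p w wL, g p (w - wL) w =
      if 0 < w - wL then p + δ + stoppingGapChange amin vmin w wL else p + δ := by
    intro p w wL
    rw [hg, add_assoc (p + δ), braking_terms_eq_stoppingGapChange hamin.ne]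
  have hphat' : phat t = phat0 + ∫ s in t0..t,
      (max (v0 + amin * (s - t0)) vmin - max (vL0 + amin * (s - t0)) vmin) := by
    simp only [hphat, hv, hvL]
  have hterminal : phat t + stoppingGapChange amin vmin (v t) (vL t) =
      phat0 + stoppingGapChange amin vmin v0 vL0 := by
    rw [hphat', integral_sub_max_affine hamin.ne hv0.1 hvL0.1, hv, hvL]
    ring
  have hterminal0 : phat0 + δ + stoppingGapChange amin vmin v0 vL0 ≤ 0 := by
    rw [hg_terminal] at hinit
    split_ifs at hinit with hfaster
    · exact hinit
    · linarith [stoppingGapChange_nonpos hamin hv0.1 (by linarith : v0 ≤ vL0)]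
  rw [hg_terminal]
  split_ifs with hq
  · linarith
  rcases lt_or_ge vL0 v0 with hfaster | hslower
  · have hvt : v t = vL t := le_antisymm (by linarith) (by
      rw [hv, hvL]; exact max_le_max_right _ (by linarith))
    rw [hvt, stoppingGapChange_self] at hterminal
    linarith
  · rw [hg_terminal, if_neg (by linarith)] at hinit
    linarith [integral_sub_max_affine_nonpos (a := amin) (m := vmin) hslower ht]

/-- recursive feasibility, worst case: if the leader brakes at
`a_min` until reaching `v_min` and then cruises, and the follower does the
same, then the (piecewise) safety function stays nonpositive for all `t ≥ t₀`.
The clipped-speed trajectories are `max (v₀ + a_min (t − t₀)) v_min`, and the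
gap evolves as the integral of the relative speed. -/
theorem recursive_feasibility_worst_case
    (δ amin vmin vmax t0 : ℝ)
    (phat0 v0 vL0 : ℝ)
    (hδ : 0 < δ) (hamin : amin < 0) (hvmin : 0 < vmin) (hvv : vmin ≤ vmax)
    (hv0 : v0 ∈ Set.Icc vmin vmax) (hvL0 : vL0 ∈ Set.Icc vmin vmax)
    -- follower and leader clipped braking trajectories
    (v vL : ℝ → ℝ)
    (hv : ∀ t, v t = max (v0 + amin * (t - t0)) vmin)
    (hvL : ∀ t, vL t = max (vL0 + amin * (t - t0)) vmin)
    -- gap dynamics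
    (phat : ℝ → ℝ)
    (hphat : ∀ t, phat t = phat0 + ∫ s in t0..t, (v s - vL s))
    -- safety function (piecewise in the sign of v̂)
    (g : ℝ → ℝ → ℝ → ℝ)
    (hg : ∀ p q w, g p q w =
      if 0 < q then
        p + δ + q * (vmin - w) / amin + q ^ 2 / (2 * amin)
      else p + δ)
    -- initial feasibility
    (hinit : g phat0 (v0 - vL0) v0 ≤ 0) :
    ∀ t ≥ t0, g (phat t) (v t - vL t) (v t) ≤ 0 :=
  recursive_feasibility_worst_case_general δ amin vmin vmax t0 phat0 v0 vL0 hamin hv0 hvL0 v vL hv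
    hvL phat hphat g hg hinit
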